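/- arXiv:0912.1320 — 3 statements merged into one kernel-verified Lean document; each statement's English description precedes it below -/
import Mathlib

section
/- The assignment *: aΔ → aΔ fixing objects, sending α_i ↦ β_i, β_i ↦ α_i, τ ↦ τ^{-1}, δ_± ↦ δ_±, and reversing words, is a well-defined involution on aΔ; in particular it preserves all defining relations of aΔ, so aΔ ≅ aΔ^op. -/
/-!
Reversing words while exchanging `α_i ↔ β_i`, inverting `τ` and fixing `δ±` is a functor
from the free category on the generators to `aΔᵒᵖ`. It respects the defining relations
because it carries each of them to another defining relation read backwards: (1) ↔ (2),
(4) ↔ (5) after conjugating by `τ`, and within (6) the cases `i < j - 1` and `i > j + 1`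
are exchanged, as are `α_i β_{i+1} = 1` and `α_{i+1} β_i = 1`, and `α_1 β_{2n+2} = τ⁻¹`
and `α_{2n+2} β_1 = τ`; (7) holds because `δ±` are central. On `[n]` we have
`τ⁻¹ = τ^(n-1)`, so applying the map twice sends `τ` to `τ^((n-1)²) = τ` as
`(n-1)² ≡ 1 mod n`. Hence the composite fixes every generator and is the identity.
-/

open CategoryTheory

namespace AnnularCat

/-- Objects of the annular category `aΔ`: `pos n` stands for `[n+1]` (`n : ℕ`), and
`zp`, `zm` stand for `[0+]` and `[0-]`. -/
inductive AObj : Type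
  | zp : AObj
  | zm : AObj
  | pos (n : ℕ) : AObj

open AObj

/-- Generators of `aΔ`: `α n i : [n+2] → [n+1]` (`1 ≤ i ≤ 2(n+2)`), with
`a1 : [1] → [0+]`, `a2 : [1] → [0-]`; `β n i : [n+1] → [n+2]` (`1 ≤ i ≤ 2(n+1)+2`), with
`b1 : [0+] → [1]`, `b2 : [0-] → [1]`; the rotation `τ n : [n+1] → [n+1]`; and the
coupling constants `δ₊, δ₋` at every object. -/
inductive AGen : AObj → AObj → Type
  | a1 : AGen (pos 0) zp
  | a2 : AGen (pos 0) zm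
  | α (n i : ℕ) (h1 : 1 ≤ i) (h2 : i ≤ 2 * n + 4) : AGen (pos (n + 1)) (pos n)
  | b1 : AGen zp (pos 0)
  | b2 : AGen zm (pos 0)
  | β (n i : ℕ) (h1 : 1 ≤ i) (h2 : i ≤ 2 * n + 4) : AGen (pos n) (pos (n + 1))
  | τ (n : ℕ) : AGen (pos n) (pos n)
  | δp (X : AObj) : AGen X X
  | δm (X : AObj) : AGen X X

instance : Quiver AObj := ⟨AGen⟩

abbrev APath := Paths AObj

def po (n : ℕ) : APath := (Paths.of AObj).obj (pos n)
def pzp : APath := (Paths.of AObj).obj zp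
def pzm : APath := (Paths.of AObj).obj zm

def pα (n i : ℕ) (h1 : 1 ≤ i) (h2 : i ≤ 2 * n + 4) : po (n + 1) ⟶ po n :=
  Quiver.Hom.toPath (AGen.α n i h1 h2)
def pa1 : po 0 ⟶ pzp := Quiver.Hom.toPath AGen.a1
def pa2 : po 0 ⟶ pzm := Quiver.Hom.toPath AGen.a2
def pβ (n i : ℕ) (h1 : 1 ≤ i) (h2 : i ≤ 2 * n + 4) : po n ⟶ po (n + 1) :=
  Quiver.Hom.toPath (AGen.β n i h1 h2)
def pb1 : pzp ⟶ po 0 := Quiver.Hom.toPath AGen.b1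
def pb2 : pzm ⟶ po 0 := Quiver.Hom.toPath AGen.b2
def pτ (n : ℕ) : po n ⟶ po n := Quiver.Hom.toPath (AGen.τ n)
def pδp (X : AObj) : (Paths.of AObj).obj X ⟶ (Paths.of AObj).obj X := Quiver.Hom.toPath (AGen.δp X)
def pδm (X : AObj) : (Paths.of AObj).obj X ⟶ (Paths.of AObj).obj X := Quiver.Hom.toPath (AGen.δm X)

def pτpow (n : ℕ) : ℕ → (po n ⟶ po n)
  | 0 => 𝟙 _
  | k + 1 => pτpow n k ≫ pτ n

/-- The defining relations (1)-(7) of the annular category `aΔ`. Composition is written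
left-to-right, so the word `α_i α_j` (applying `α_j` first) is `pα _ j _ _ ≫ pα _ i _ _`.
The object `[n]` of the paper is `pos (n-1)` here, so on `[n]` the paper bound `2n+2`
for `β`-indices and the bound `2(n+1)` for `α`-indices out of `[n+1]` both read
`2 * m + 4` for `[n] = pos m`. -/
inductive ARel : ∀ {X Y : APath}, (X ⟶ Y) → (X ⟶ Y) → Prop
  -- (1)  α_i α_j = α_{j-2} α_i  for i < j-1, (i,j) ≠ (1, 2n)
  | αα (n i j : ℕ) (h1 : 1 ≤ i) (hij : i < j - 1) (hj : j ≤ 2 * n + 6)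
      (hne : ¬(i = 1 ∧ j = 2 * n + 6)) :
      ARel (pα (n + 1) j (by omega) (by omega) ≫ pα n i (by omega) (by omega))
           (pα (n + 1) i (by omega) (by omega) ≫ pα n (j - 2) (by omega) (by omega))
  | αα1 : ARel (pα 0 3 (by omega) (by omega) ≫ pa1) (pα 0 1 (by omega) (by omega) ≫ pa1)
  | αα2 : ARel (pα 0 4 (by omega) (by omega) ≫ pa2) (pα 0 2 (by omega) (by omega) ≫ pa2)
  -- (2)  β_i β_j = β_{j+2} β_i  for i ≤ j, (i,j) ≠ (1, 2n+2)
  | ββ (n i j : ℕ) (h1 : 1 ≤ i) (hij : i ≤ j) (hj : j ≤ 2 * n + 4)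
      (hne : ¬(i = 1 ∧ j = 2 * n + 4)) :
      ARel (pβ n j (by omega) (by omega) ≫ pβ (n + 1) i (by omega) (by omega))
           (pβ n i (by omega) (by omega) ≫ pβ (n + 1) (j + 2) (by omega) (by omega))
  | ββ1 : ARel (pb1 ≫ pβ 0 1 (by omega) (by omega)) (pb1 ≫ pβ 0 3 (by omega) (by omega))
  | ββ2 : ARel (pb2 ≫ pβ 0 2 (by omega) (by omega)) (pb2 ≫ pβ 0 4 (by omega) (by omega))
  -- (3)  τ^n = id on [n]
  | τpow (n : ℕ) : ARel (pτpow n (n + 1)) (𝟙 (po n))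
  -- (4)  α_i τ = τ α_{i-2}  for i ≥ 3
  | ατ (n i : ℕ) (h1 : 3 ≤ i) (h2 : i ≤ 2 * n + 4) :
      ARel (pτ (n + 1) ≫ pα n i (by omega) (by omega))
           (pα n (i - 2) (by omega) (by omega) ≫ pτ n)
  -- (5)  β_i τ = τ β_{i-2}  for i ≥ 3
  | βτ (n i : ℕ) (h1 : 3 ≤ i) (h2 : i ≤ 2 * n + 4) :
      ARel (pτ n ≫ pβ n i (by omega) (by omega))
           (pβ n (i - 2) (by omega) (by omega) ≫ pτ (n + 1))
  -- (6)  δ₊ = α_1 β_1 on [0+], δ₋ = α_2 β_2 on [0-], and the α_i β_j relations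
  | δp0 : ARel (pb1 ≫ pa1) (pδp zp)
  | δm0 : ARel (pb2 ≫ pa2) (pδm zm)
  | αβ_τinv (n : ℕ) :
      ARel (pβ n (2 * n + 4) (by omega) (by omega) ≫ pα n 1 (by omega) (by omega))
           (pτpow n n)
  | αβ_lt (n i j : ℕ) (h1 : 1 ≤ i) (hij : i < j - 1) (hj : j ≤ 2 * n + 6)
      (hne : ¬(i = 1 ∧ j = 2 * n + 6)) :
      ARel (pβ (n + 1) j (by omega) (by omega) ≫ pα (n + 1) i (by omega) (by omega))
           (pα n i (by omega) (by omega) ≫ pβ n (j - 2) (by omega) (by omega))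
  | αβ_lt1 : ARel (pβ 0 3 (by omega) (by omega) ≫ pα 0 1 (by omega) (by omega)) (pa1 ≫ pb1)
  | αβ_lt2 : ARel (pβ 0 4 (by omega) (by omega) ≫ pα 0 2 (by omega) (by omega)) (pa2 ≫ pb2)
  | αβ_id1 (n i : ℕ) (h1 : 1 ≤ i) (h2 : i + 1 ≤ 2 * n + 4) :
      ARel (pβ n (i + 1) (by omega) (by omega) ≫ pα n i (by omega) (by omega)) (𝟙 (po n))
  | αβ_id2 (n j : ℕ) (h1 : 1 ≤ j) (h2 : j + 1 ≤ 2 * n + 4) :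
      ARel (pβ n j (by omega) (by omega) ≫ pα n (j + 1) (by omega) (by omega)) (𝟙 (po n))
  | αβ_δp (n i : ℕ) (h1 : 1 ≤ i) (h2 : i ≤ 2 * n + 4) (hodd : i % 2 = 1) :
      ARel (pβ n i (by omega) (by omega) ≫ pα n i (by omega) (by omega)) (pδp (pos n))
  | αβ_δm (n i : ℕ) (h1 : 1 ≤ i) (h2 : i ≤ 2 * n + 4) (heven : i % 2 = 0) :
      ARel (pβ n i (by omega) (by omega) ≫ pα n i (by omega) (by omega)) (pδm (pos n))
  | αβ_gt (n i j : ℕ) (h1 : 1 ≤ j) (hij : j + 1 < i) (hi : i ≤ 2 * n + 6)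
      (hne : ¬(i = 2 * n + 6 ∧ j = 1)) :
      ARel (pβ (n + 1) j (by omega) (by omega) ≫ pα (n + 1) i (by omega) (by omega))
           (pα n (i - 2) (by omega) (by omega) ≫ pβ n j (by omega) (by omega))
  | αβ_gt1 : ARel (pβ 0 1 (by omega) (by omega) ≫ pα 0 3 (by omega) (by omega)) (pa1 ≫ pb1)
  | αβ_gt2 : ARel (pβ 0 2 (by omega) (by omega) ≫ pα 0 4 (by omega) (by omega)) (pa2 ≫ pb2)
  | αβ_τ (n : ℕ) :
      ARel (pβ n 1 (by omega) (by omega) ≫ pα n (2 * n + 4) (by omega) (by omega)) (pτ n)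
  -- (7)  δ₊ and δ₋ commute with all generators
  | δp_comm {X Y : AObj} (g : AGen X Y) :
      ARel (pδp X ≫ Quiver.Hom.toPath g) (Quiver.Hom.toPath g ≫ pδp Y)
  | δm_comm {X Y : AObj} (g : AGen X Y) :
      ARel (pδm X ≫ Quiver.Hom.toPath g) (Quiver.Hom.toPath g ≫ pδm Y)

def arel : HomRel APath := @fun _ _ f g => ARel f g

/-- The annular category `aΔ ≅ Atl`, presented by generators and relations. -/
abbrev Ann := CategoryTheory.Quotient arel

/-- The object `[n+1]` of `aΔ`. -/
def qo (n : ℕ) : Ann := (Quotient.functor arel).obj (po n)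
/-- The object `[0+]` of `aΔ`. -/
def qzp : Ann := (Quotient.functor arel).obj pzp
/-- The object `[0-]` of `aΔ`. -/
def qzm : Ann := (Quotient.functor arel).obj pzm

/-- `α_i : [n+2] → [n+1]`, for `1 ≤ i ≤ 2(n+2)`. -/
def A (n i : ℕ) (h1 : 1 ≤ i) (h2 : i ≤ 2 * n + 4) : qo (n + 1) ⟶ qo n :=
  (Quotient.functor arel).map (pα n i h1 h2)
/-- `α_1 : [1] → [0+]`. -/
def A1 : qo 0 ⟶ qzp := (Quotient.functor arel).map pa1
/-- `α_2 : [1] → [0-]`. -/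
def A2 : qo 0 ⟶ qzm := (Quotient.functor arel).map pa2
/-- `β_i : [n+1] → [n+2]`, for `1 ≤ i ≤ 2(n+1)+2`. -/
def B (n i : ℕ) (h1 : 1 ≤ i) (h2 : i ≤ 2 * n + 4) : qo n ⟶ qo (n + 1) :=
  (Quotient.functor arel).map (pβ n i h1 h2)
/-- `β_1 : [0+] → [1]`. -/
def B1 : qzp ⟶ qo 0 := (Quotient.functor arel).map pb1
/-- `β_2 : [0-] → [1]`. -/
def B2 : qzm ⟶ qo 0 := (Quotient.functor arel).map pb2
/-- The rotation `τ : [n+1] → [n+1]`. -/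
def T (n : ℕ) : qo n ⟶ qo n := (Quotient.functor arel).map (pτ n)
/-- `τ^k : [n+1] → [n+1]`. -/
def Tpow (n k : ℕ) : qo n ⟶ qo n := (Quotient.functor arel).map (pτpow n k)
/-- The coupling constant `δ₊` at an object. -/
def Dp (X : AObj) : (Quotient.functor arel).obj ((Paths.of AObj).obj X) ⟶
    (Quotient.functor arel).obj ((Paths.of AObj).obj X) := (Quotient.functor arel).map (pδp X)
/-- The coupling constant `δ₋` at an object. -/
def Dm (X : AObj) : (Quotient.functor arel).obj ((Paths.of AObj).obj X) ⟶
    (Quotient.functor arel).obj ((Paths.of AObj).obj X) := (Quotient.functor arel).map (pδm X)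

end AnnularCat

open AnnularCat

namespace CategoryTheory

theorem Iso.comp_inv_eq_inv_comp_of_hom_comp_eq {C : Type*} [Category C] {X X' Y Y' : C}
    (u : X ≅ X') (v : Y ≅ Y') {g : X' ⟶ Y'} {f : X ⟶ Y} (h : u.hom ≫ g = f ≫ v.hom) :
    g ≫ v.inv = u.inv ≫ f := by
  rw [Iso.comp_inv_eq, Category.assoc, Iso.eq_inv_comp, h]

theorem Functor.leftOp_comp_eq_id {C : Type*} [Category C] (F : C ⥤ Cᵒᵖ)
    (h : F ⋙ F.leftOp = 𝟭 C) : F.leftOp ⋙ F = 𝟭 Cᵒᵖ := by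
  change (F ⋙ F.leftOp).op = _
  rw [h]
  rfl

end CategoryTheory

namespace AnnularCat

section Rotation

lemma pτpow_add (n a b : ℕ) : pτpow n (a + b) = pτpow n a ≫ pτpow n b := by
  induction b with
  | zero => exact (Category.comp_id _).symm
  | succ b ih => rw [← Nat.add_assoc, pτpow, ih, pτpow, Category.assoc]

lemma Tpow_add (n a b : ℕ) : Tpow n (a + b) = Tpow n a ≫ Tpow n b := by
  change (Quotient.functor arel).map (pτpow n (a + b)) = _
  rw [pτpow_add]
  exact Functor.map_comp _ _ _

lemma Tpow_zero (n : ℕ) : Tpow n 0 = 𝟙 (qo n) := (Quotient.functor arel).map_id _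

lemma Tpow_one (n : ℕ) : Tpow n 1 = T n := by
  change (Quotient.functor arel).map (pτpow n 0 ≫ pτ n) = _
  rw [pτpow, Category.id_comp]
  rfl

lemma Tpow_period (n : ℕ) : Tpow n (n + 1) = 𝟙 (qo n) :=
  (CategoryTheory.Quotient.sound arel (ARel.τpow n)).trans ((Quotient.functor arel).map_id _)

lemma Tpow_mul_period (n m : ℕ) : Tpow n ((n + 1) * m) = 𝟙 (qo n) := by
  induction m with
  | zero => exact Tpow_zero n
  | succ m ih => rw [Nat.mul_succ, Tpow_add, ih, Tpow_period, Category.comp_id]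

lemma Tpow_congr_mod (n : ℕ) {a b : ℕ} (h : a % (n + 1) = b % (n + 1)) :
    Tpow n a = Tpow n b := by
  rw [← Nat.mod_add_div a (n + 1), ← Nat.mod_add_div b (n + 1), Tpow_add, Tpow_add,
    Tpow_mul_period, Tpow_mul_period, h]

lemma Tpow_mul_self (n : ℕ) : Tpow n (n * n) = T n := by
  rw [← Tpow_one]
  apply Tpow_congr_mod
  cases n with
  | zero => rfl
  | succ m => rw [show (m + 1) * (m + 1) = 1 + (m + 1 + 1) * m by ring, Nat.add_mul_mod_self_left]

def rotation (n : ℕ) : qo n ≅ qo n where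
  hom := T n
  inv := Tpow n n
  hom_inv_id := by rw [← Tpow_one, ← Tpow_add, Nat.add_comm, Tpow_period]
  inv_hom_id := by rw [← Tpow_one, ← Tpow_add, Tpow_period]

end Rotation

def deltaPlus : 𝟭 Ann ⟶ 𝟭 Ann :=
  Quotient.natTransLift arel <| Paths.liftNatTrans Dp fun g =>
    (CategoryTheory.Quotient.sound arel (ARel.δp_comm g)).symm.trans (Functor.map_comp _ _ _)

def deltaMinus : 𝟭 Ann ⟶ 𝟭 Ann :=
  Quotient.natTransLift arel <| Paths.liftNatTrans Dm fun g =>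
    (CategoryTheory.Quotient.sound arel (ARel.δm_comm g)).symm.trans (Functor.map_comp _ _ _)

def starGen : ∀ {X Y : AObj}, AGen X Y →
    ((Quotient.functor arel).obj ((Paths.of AObj).obj Y) ⟶
      (Quotient.functor arel).obj ((Paths.of AObj).obj X))
  | _, _, .a1 => B1
  | _, _, .a2 => B2
  | _, _, .α n i h1 h2 => B n i h1 h2
  | _, _, .b1 => A1
  | _, _, .b2 => A2
  | _, _, .β n i h1 h2 => A n i h1 h2
  | _, _, .τ n => (rotation n).inv
  | _, _, .δp X => Dp X
  | _, _, .δm X => Dm X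

def starPaths : APath ⥤ Annᵒᵖ :=
  Paths.lift
    { obj := fun X => Opposite.op ((Quotient.functor arel).obj X)
      map := fun g => (starGen g).op }

lemma starPaths_map_of_map {X Y : AObj} (g : AGen X Y) :
    starPaths.map ((Paths.of AObj).map g) = (starGen g).op :=
  Paths.lift_toPath _ _

section StarPathsGenerators

variable (n i : ℕ) (h1 : 1 ≤ i) (h2 : i ≤ 2 * n + 4)

lemma unop_starPaths_map_pα : (starPaths.map (pα n i h1 h2)).unop = B n i h1 h2 :=
  congrArg Quiver.Hom.unop (starPaths_map_of_map _)
lemma unop_starPaths_map_pβ : (starPaths.map (pβ n i h1 h2)).unop = A n i h1 h2 :=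
  congrArg Quiver.Hom.unop (starPaths_map_of_map _)
lemma unop_starPaths_map_pa1 : (starPaths.map pa1).unop = B1 :=
  congrArg Quiver.Hom.unop (starPaths_map_of_map _)
lemma unop_starPaths_map_pa2 : (starPaths.map pa2).unop = B2 :=
  congrArg Quiver.Hom.unop (starPaths_map_of_map _)
lemma unop_starPaths_map_pb1 : (starPaths.map pb1).unop = A1 :=
  congrArg Quiver.Hom.unop (starPaths_map_of_map _)
lemma unop_starPaths_map_pb2 : (starPaths.map pb2).unop = A2 :=
  congrArg Quiver.Hom.unop (starPaths_map_of_map _)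
lemma unop_starPaths_map_pτ : (starPaths.map (pτ n)).unop = Tpow n n :=
  congrArg Quiver.Hom.unop (starPaths_map_of_map _)
lemma unop_starPaths_map_pδp (X : AObj) : (starPaths.map (pδp X)).unop = Dp X :=
  congrArg Quiver.Hom.unop (starPaths_map_of_map _)
lemma unop_starPaths_map_pδm (X : AObj) : (starPaths.map (pδm X)).unop = Dm X :=
  congrArg Quiver.Hom.unop (starPaths_map_of_map _)

lemma unop_starPaths_map_pτpow (k : ℕ) :
    (starPaths.map (pτpow n k)).unop = Tpow n (n * k) := by
  induction k with
  | zero => exact Tpow_zero n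
  | succ k ih =>
    rw [pτpow, Functor.map_comp, unop_comp, ih, unop_starPaths_map_pτ, Nat.mul_succ,
      Nat.add_comm (n * k), Tpow_add]
    rfl

end StarPathsGenerators

lemma starPaths_map_pδp_comm {X Y : AObj} (g : AGen X Y) :
    starPaths.map (pδp X ≫ (Paths.of AObj).map g) =
      starPaths.map ((Paths.of AObj).map g ≫ pδp Y) := by
  apply Quiver.Hom.unop_inj
  rw [Functor.map_comp, Functor.map_comp, unop_comp, unop_comp, starPaths_map_of_map,
    unop_starPaths_map_pδp, unop_starPaths_map_pδp]
  exact deltaPlus.naturality (starGen g)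

lemma starPaths_map_pδm_comm {X Y : AObj} (g : AGen X Y) :
    starPaths.map (pδm X ≫ (Paths.of AObj).map g) =
      starPaths.map ((Paths.of AObj).map g ≫ pδm Y) := by
  apply Quiver.Hom.unop_inj
  rw [Functor.map_comp, Functor.map_comp, unop_comp, unop_comp, starPaths_map_of_map,
    unop_starPaths_map_pδm, unop_starPaths_map_pδm]
  exact deltaMinus.naturality (starGen g)

lemma B_comp_B_of_lt {n i j : ℕ} (h1 : 1 ≤ i) (hij : i < j - 1)
    (hne : ¬(i = 1 ∧ j = 2 * n + 6)) {p₁ p₂ p₃ p₄ p₅ p₆ p₇ p₈} :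
    B n i p₁ p₂ ≫ B (n + 1) j p₃ p₄ = B n (j - 2) p₅ p₆ ≫ B (n + 1) i p₇ p₈ := by
  obtain ⟨k, rfl⟩ : ∃ k, j = k + 2 := ⟨j - 2, by omega⟩
  simp only [Nat.add_sub_cancel]
  exact (CategoryTheory.Quotient.sound arel
    (ARel.ββ n i k h1 (by omega) (by omega) (by omega))).symm

lemma A_comp_A_of_le {n i j : ℕ} (h1 : 1 ≤ i) (hij : i ≤ j)
    (hne : ¬(i = 1 ∧ j = 2 * n + 4)) {p₁ p₂ p₃ p₄ p₅ p₆ p₇ p₈} :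
    A (n + 1) i p₁ p₂ ≫ A n j p₃ p₄ = A (n + 1) (j + 2) p₅ p₆ ≫ A n i p₇ p₈ := by
  have h := CategoryTheory.Quotient.sound arel
    (ARel.αα n i (j + 2) h1 (by omega) (by omega) (by omega))
  simp only [Nat.add_sub_cancel] at h
  exact h.symm

lemma starPaths_map_eq_of_rel {X Y : APath} {f g : X ⟶ Y} (h : ARel f g) :
    starPaths.map f = starPaths.map g := by
  have rel {X Y : APath} {f g : X ⟶ Y} (h : ARel f g) :
      (Quotient.functor arel).map f = (Quotient.functor arel).map g :=
    CategoryTheory.Quotient.sound arel h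
  cases h
  case δp_comm g => exact starPaths_map_pδp_comm g
  case δm_comm g => exact starPaths_map_pδm_comm g
  all_goals apply Quiver.Hom.unop_inj; simp only [Functor.map_comp, unop_comp,
    unop_starPaths_map_pα, unop_starPaths_map_pβ, unop_starPaths_map_pa1,
    unop_starPaths_map_pa2, unop_starPaths_map_pb1, unop_starPaths_map_pb2,
    unop_starPaths_map_pτ, unop_starPaths_map_pτpow]
  case αα n i j h1 hij _ hne => exact B_comp_B_of_lt h1 hij hne
  case αα1 => exact (rel ARel.ββ1).symm
  case αα2 => exact (rel ARel.ββ2).symm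
  case ββ n i j h1 hij _ hne => exact A_comp_A_of_le h1 hij hne
  case ββ1 => exact (rel ARel.αα1).symm
  case ββ2 => exact (rel ARel.αα2).symm
  case τpow n =>
    rw [CategoryTheory.Functor.map_id, unop_id, Nat.mul_comm]
    exact Tpow_mul_period n n
  case ατ n i h1 h2 =>
    exact Iso.comp_inv_eq_inv_comp_of_hom_comp_eq (rotation n) (rotation (n + 1))
      (rel (ARel.βτ n i h1 h2))
  case βτ n i h1 h2 =>
    exact Iso.comp_inv_eq_inv_comp_of_hom_comp_eq (rotation (n + 1)) (rotation n)
      (rel (ARel.ατ n i h1 h2))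
  case δp0 => exact rel ARel.δp0
  case δm0 => exact rel ARel.δm0
  case αβ_τinv n => exact (rel (ARel.αβ_τ n)).trans (Tpow_mul_self n).symm
  case αβ_lt n i j h1 hij hj hne => exact rel (ARel.αβ_gt n j i h1 (by omega) hj (by omega))
  case αβ_lt1 => exact rel ARel.αβ_gt1
  case αβ_lt2 => exact rel ARel.αβ_gt2
  case αβ_id1 n i h1 h2 => exact rel (ARel.αβ_id2 n i h1 h2)
  case αβ_id2 n j h1 h2 => exact rel (ARel.αβ_id1 n j h1 h2)
  case αβ_δp n i h1 h2 hodd => exact rel (ARel.αβ_δp n i h1 h2 hodd)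
  case αβ_δm n i h1 h2 heven => exact rel (ARel.αβ_δm n i h1 h2 heven)
  case αβ_gt n i j h1 hij hi hne => exact rel (ARel.αβ_lt n j i h1 (by omega) hi (by omega))
  case αβ_gt1 => exact rel ARel.αβ_lt1
  case αβ_gt2 => exact rel ARel.αβ_lt2
  case αβ_τ n => exact rel (ARel.αβ_τinv n)

def star : Ann ⥤ Annᵒᵖ :=
  CategoryTheory.Quotient.lift arel starPaths fun _ _ _ _ h => starPaths_map_eq_of_rel h

lemma star_map_functor_map {X Y : APath} (p : X ⟶ Y) :
    star.map ((Quotient.functor arel).map p) = starPaths.map p :=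
  CategoryTheory.Quotient.lift_map_functor_map _ _ _ p

lemma star_map_starGen {X Y : AObj} (g : AGen X Y) :
    (star.map (starGen g)).unop = (Quotient.functor arel).map ((Paths.of AObj).map g) := by
  cases g
  case τ n =>
    exact (congrArg Quiver.Hom.unop (star_map_functor_map _)).trans
      ((unop_starPaths_map_pτpow n n).trans (Tpow_mul_self n))
  all_goals exact congrArg Quiver.Hom.unop ((star_map_functor_map _).trans (starPaths_map_of_map _))

section Star

variable (n i : ℕ) (h1 : 1 ≤ i) (h2 : i ≤ 2 * n + 4)

lemma star_map_A : star.map (A n i h1 h2) = (B n i h1 h2).op :=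
  (star_map_functor_map _).trans (starPaths_map_of_map _)
lemma star_map_B : star.map (B n i h1 h2) = (A n i h1 h2).op :=
  (star_map_functor_map _).trans (starPaths_map_of_map _)
lemma star_map_A1 : star.map A1 = B1.op := (star_map_functor_map _).trans (starPaths_map_of_map _)
lemma star_map_A2 : star.map A2 = B2.op := (star_map_functor_map _).trans (starPaths_map_of_map _)
lemma star_map_B1 : star.map B1 = A1.op := (star_map_functor_map _).trans (starPaths_map_of_map _)
lemma star_map_B2 : star.map B2 = A2.op := (star_map_functor_map _).trans (starPaths_map_of_map _)
lemma star_map_T : star.map (T n) = (Tpow n n).op :=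
  (star_map_functor_map _).trans (starPaths_map_of_map _)
lemma star_map_Dp (X : AObj) : star.map (Dp X) = (Dp X).op :=
  (star_map_functor_map _).trans (starPaths_map_of_map _)
lemma star_map_Dm (X : AObj) : star.map (Dm X) = (Dm X).op :=
  (star_map_functor_map _).trans (starPaths_map_of_map _)

end Star

theorem star_comp_leftOp_star : star ⋙ star.leftOp = 𝟭 Ann := by
  apply CategoryTheory.Quotient.lift_unique'
  refine Paths.ext_functor rfl fun X Y g => ?_
  change (star.map (star.map ((Quotient.functor arel).map ((Paths.of AObj).map g))).unop).unop =
    (Quotient.functor arel).map ((Paths.of AObj).map g)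
  rw [star_map_functor_map, starPaths_map_of_map]
  exact star_map_starGen g

end AnnularCat

/-- The assignment `* : aΔ → aΔ` fixing objects, sending `α_i ↦ β_i`, `β_i ↦ α_i`,
`τ ↦ τ⁻¹ (= τ^n on [n+1] = qo n)`, `δ± ↦ δ±`, and reversing words, is a well-defined
involution on `aΔ`: it is a contravariant functor `F : aΔ ⥤ aΔᵒᵖ` fixing all objects,
of period two (`F ⋙ F.leftOp = 𝟭` and `F.leftOp ⋙ F = 𝟭`, which in particular makes `F`
an isomorphism of categories `aΔ ≅ aΔᵒᵖ`), acting as prescribed on the generators. -/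
theorem annular_involution :
    ∃ (F : Ann ⥤ Annᵒᵖ) (hobj : ∀ X : Ann, F.obj X = Opposite.op X),
      F ⋙ F.leftOp = 𝟭 Ann ∧
      F.leftOp ⋙ F = 𝟭 Annᵒᵖ ∧
      (∀ (n i : ℕ) (h1 : 1 ≤ i) (h2 : i ≤ 2 * n + 4),
        F.map (A n i h1 h2) =
          eqToHom (hobj _) ≫ (B n i h1 h2).op ≫ eqToHom (hobj _).symm) ∧
      (∀ (n i : ℕ) (h1 : 1 ≤ i) (h2 : i ≤ 2 * n + 4),
        F.map (B n i h1 h2) =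
          eqToHom (hobj _) ≫ (A n i h1 h2).op ≫ eqToHom (hobj _).symm) ∧
      (F.map A1 = eqToHom (hobj _) ≫ B1.op ≫ eqToHom (hobj _).symm) ∧
      (F.map A2 = eqToHom (hobj _) ≫ B2.op ≫ eqToHom (hobj _).symm) ∧
      (F.map B1 = eqToHom (hobj _) ≫ A1.op ≫ eqToHom (hobj _).symm) ∧
      (F.map B2 = eqToHom (hobj _) ≫ A2.op ≫ eqToHom (hobj _).symm) ∧
      (∀ n : ℕ, F.map (T n) = eqToHom (hobj _) ≫ (Tpow n n).op ≫ eqToHom (hobj _).symm) ∧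
      (∀ X : AObj, F.map (Dp X) = eqToHom (hobj _) ≫ (Dp X).op ≫ eqToHom (hobj _).symm) ∧
      (∀ X : AObj, F.map (Dm X) = eqToHom (hobj _) ≫ (Dm X).op ≫ eqToHom (hobj _).symm) := by
  refine ⟨star, fun _ => rfl, star_comp_leftOp_star,
    star.leftOp_comp_eq_id star_comp_leftOp_star, ?_⟩
  have conj {X Y : Ann} {f : X ⟶ Y} {g : Opposite.op X ⟶ Opposite.op Y} (h : star.map f = g) :
      star.map f = eqToHom rfl ≫ g ≫ eqToHom rfl :=
    (conj_eqToHom_iff_heq' _ _ _ _).2 (heq_of_eq h)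
  exact ⟨fun n i h1 h2 => conj (star_map_A n i h1 h2),
    fun n i h1 h2 => conj (star_map_B n i h1 h2),
    conj star_map_A1, conj star_map_A2, conj star_map_B1, conj star_map_B2,
    fun n => conj (star_map_T n), fun X => conj (star_map_Dp X), fun X => conj (star_map_Dm X)⟩
end

section
/- Let X_• be an annular R-module (a functor from aΔ to R-modules with the sign convention). For each n ≥ 1, with b_+ = Σ_{i=0}^{n-1} (-1)^i α_{2i+1} : X_n → X_{n-1}, the identity β_1 b_+ + b_+ β_1 = δ_+ · id_{X_n} holds, where δ_+ denotes the action of the coupling constant on X_n. -/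
open scoped BigOperators

/-- An annular `R`-module (an annular object in `R`-modules, with the sign convention):
`M k` is the module attached to the object `[k+1]` of the annular category `aΔ`, and
`Xp`, `Xm` are attached to `[0+]` and `[0-]`.  The structure maps are
`α k i : M (k+1) →ₗ M k` for `1 ≤ i ≤ 2(k+2)` (with `α1 : M 0 →ₗ Xp`, `α2 : M 0 →ₗ Xm`),
`β k i : M k →ₗ M (k+1)` for `1 ≤ i ≤ 2(k+1)+2` (with `β1 : Xp →ₗ M 0`,
`β2 : Xm →ₗ M 0`), the (signed) rotation `τ k` with `τ^{k+1} = 1`, and the central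
coupling constants `δ₊`, `δ₋`.  The relations are (1)-(7) of `aΔ` with the sign
convention `(4')`, `(5')`, `(6')` for annular objects in an abelian category.
(For `[n] = M k` one has `n = k + 1`, so the bounds `2n+2` for `β`-indices and
`2(n+1)` for `α`-indices out of `[n+1]` both read `2k+4`.) -/
structure AnnularModule (R : Type*) [CommRing R] (M : ℕ → Type*) (Xp Xm : Type*)
    [∀ n, AddCommGroup (M n)] [∀ n, Module R (M n)]
    [AddCommGroup Xp] [Module R Xp] [AddCommGroup Xm] [Module R Xm] where
  α : ∀ n : ℕ, ℕ → (M (n + 1) →ₗ[R] M n)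
  α1 : M 0 →ₗ[R] Xp
  α2 : M 0 →ₗ[R] Xm
  β : ∀ n : ℕ, ℕ → (M n →ₗ[R] M (n + 1))
  β1 : Xp →ₗ[R] M 0
  β2 : Xm →ₗ[R] M 0
  τ : ∀ n : ℕ, M n →ₗ[R] M n
  δp : ∀ n : ℕ, M n →ₗ[R] M n
  δpp : Xp →ₗ[R] Xp
  δpm : Xm →ₗ[R] Xm
  δm : ∀ n : ℕ, M n →ₗ[R] M n
  δmp : Xp →ₗ[R] Xp
  δmm : Xm →ₗ[R] Xm
  -- (1)  α_i α_j = α_{j-2} α_i  for i < j - 1, (i,j) ≠ (1,2n)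
  rel1 : ∀ n i j, 1 ≤ i → i < j - 1 → j ≤ 2 * n + 6 → ¬(i = 1 ∧ j = 2 * n + 6) →
    α n i ∘ₗ α (n + 1) j = α n (j - 2) ∘ₗ α (n + 1) i
  rel1p : α1 ∘ₗ α 0 3 = α1 ∘ₗ α 0 1
  rel1m : α2 ∘ₗ α 0 4 = α2 ∘ₗ α 0 2
  -- (2)  β_i β_j = β_{j+2} β_i  for i ≤ j, (i,j) ≠ (1,2n+2)
  rel2 : ∀ n i j, 1 ≤ i → i ≤ j → j ≤ 2 * n + 4 → ¬(i = 1 ∧ j = 2 * n + 4) →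
    β (n + 1) i ∘ₗ β n j = β (n + 1) (j + 2) ∘ₗ β n i
  rel2p : β 0 1 ∘ₗ β1 = β 0 3 ∘ₗ β1
  rel2m : β 0 2 ∘ₗ β2 = β 0 4 ∘ₗ β2
  -- (3)  τ^n = id on [n]
  rel3 : ∀ n, (τ n : Module.End R (M n)) ^ (n + 1) = 1
  -- (4') α_i τ = -τ α_{i-2}  for i ≥ 3
  rel4 : ∀ n i, 3 ≤ i → i ≤ 2 * n + 4 →
    α n i ∘ₗ τ (n + 1) = -(τ n ∘ₗ α n (i - 2))
  -- (5') β_i τ = -τ β_{i-2}  for i ≥ 3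
  rel5 : ∀ n i, 3 ≤ i → i ≤ 2 * n + 4 →
    β n i ∘ₗ τ n = -(τ (n + 1) ∘ₗ β n (i - 2))
  -- (6/6') the α_i β_j relations (with signs on the τ^{±1} cases)
  rel6_p : α1 ∘ₗ β1 = δpp
  rel6_m : α2 ∘ₗ β2 = δmm
  rel6_τinv : ∀ n, α n 1 ∘ₗ β n (2 * n + 4) =
    ((-1 : ℤ) ^ n) • (((τ n : Module.End R (M n)) ^ n : Module.End R (M n)) : M n →ₗ[R] M n)
  rel6_lt : ∀ n i j, 1 ≤ i → i < j - 1 → j ≤ 2 * n + 6 → ¬(i = 1 ∧ j = 2 * n + 6) →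
    α (n + 1) i ∘ₗ β (n + 1) j = β n (j - 2) ∘ₗ α n i
  rel6_ltp : α 0 1 ∘ₗ β 0 3 = β1 ∘ₗ α1
  rel6_ltm : α 0 2 ∘ₗ β 0 4 = β2 ∘ₗ α2
  rel6_id1 : ∀ n i, 1 ≤ i → i + 1 ≤ 2 * n + 4 → α n i ∘ₗ β n (i + 1) = LinearMap.id
  rel6_id2 : ∀ n j, 1 ≤ j → j + 1 ≤ 2 * n + 4 → α n (j + 1) ∘ₗ β n j = LinearMap.id
  rel6_δp : ∀ n i, 1 ≤ i → i ≤ 2 * n + 4 → i % 2 = 1 → α n i ∘ₗ β n i = δp n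
  rel6_δm : ∀ n i, 1 ≤ i → i ≤ 2 * n + 4 → i % 2 = 0 → α n i ∘ₗ β n i = δm n
  rel6_gt : ∀ n i j, 1 ≤ j → j + 1 < i → i ≤ 2 * n + 6 → ¬(i = 2 * n + 6 ∧ j = 1) →
    α (n + 1) i ∘ₗ β (n + 1) j = β n j ∘ₗ α n (i - 2)
  rel6_gtp : α 0 3 ∘ₗ β 0 1 = β1 ∘ₗ α1
  rel6_gtm : α 0 4 ∘ₗ β 0 2 = β2 ∘ₗ α2
  rel6_τ : ∀ n, α n (2 * n + 4) ∘ₗ β n 1 = ((-1 : ℤ) ^ n) • τ n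
  -- (7) δ₊ and δ₋ commute with all generators
  rel7_pα : ∀ n i, δp n ∘ₗ α n i = α n i ∘ₗ δp (n + 1)
  rel7_pβ : ∀ n i, δp (n + 1) ∘ₗ β n i = β n i ∘ₗ δp n
  rel7_pτ : ∀ n, δp n ∘ₗ τ n = τ n ∘ₗ δp n
  rel7_pα1 : δpp ∘ₗ α1 = α1 ∘ₗ δp 0
  rel7_pα2 : δpm ∘ₗ α2 = α2 ∘ₗ δp 0
  rel7_pβ1 : δp 0 ∘ₗ β1 = β1 ∘ₗ δpp
  rel7_pβ2 : δp 0 ∘ₗ β2 = β2 ∘ₗ δpm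
  rel7_mα : ∀ n i, δm n ∘ₗ α n i = α n i ∘ₗ δm (n + 1)
  rel7_mβ : ∀ n i, δm (n + 1) ∘ₗ β n i = β n i ∘ₗ δm n
  rel7_mτ : ∀ n, δm n ∘ₗ τ n = τ n ∘ₗ δm n
  rel7_mα1 : δmp ∘ₗ α1 = α1 ∘ₗ δm 0
  rel7_mα2 : δmm ∘ₗ α2 = α2 ∘ₗ δm 0
  rel7_mβ1 : δm 0 ∘ₗ β1 = β1 ∘ₗ δmp
  rel7_mβ2 : δm 0 ∘ₗ β2 = β2 ∘ₗ δmm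
  rel7_pm : ∀ n, δp n ∘ₗ δm n = δm n ∘ₗ δp n
  rel7_pmp : δpp ∘ₗ δmp = δmp ∘ₗ δpp
  rel7_pmm : δpm ∘ₗ δmm = δmm ∘ₗ δpm

namespace AnnularModule

variable {R : Type*} [CommRing R] {M : ℕ → Type*} {Xp Xm : Type*}
  [∀ n, AddCommGroup (M n)] [∀ n, Module R (M n)]
  [AddCommGroup Xp] [Module R Xp] [AddCommGroup Xm] [Module R Xm]

/-- The `(+)`-Hochschild boundary `b₊ = Σ_{i=0}^{n-1} (-1)^i α_{2i+1} : X_n → X_{n-1}`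
for `n ≥ 2`; here `X_n = M (k+1)` with `n = k + 2`. -/
def bplus (X : AnnularModule R M Xp Xm) (k : ℕ) : M (k + 1) →ₗ[R] M k :=
  ∑ i ∈ Finset.range (k + 2), ((-1 : ℤ) ^ i) • X.α k (2 * i + 1)

end AnnularModule

namespace LinearMap

variable {R A B C ι : Type*} [CommRing R] [AddCommGroup A] [Module R A]
  [AddCommGroup B] [Module R B] [AddCommGroup C] [Module R C]

theorem finsetSum_comp (s : Finset ι) (f : ι → B →ₗ[R] C) (g : A →ₗ[R] B) :
    (∑ i ∈ s, f i) ∘ₗ g = ∑ i ∈ s, f i ∘ₗ g :=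
  map_sum (lcomp R C g) f s

theorem comp_finsetSum (s : Finset ι) (g : B →ₗ[R] C) (f : ι → A →ₗ[R] B) :
    g ∘ₗ (∑ i ∈ s, f i) = ∑ i ∈ s, g ∘ₗ f i :=
  map_sum (llcomp R A B C g) f s

end LinearMap

namespace AnnularModule

open Finset

variable {R : Type*} [CommRing R] {M : ℕ → Type*} {Xp Xm : Type*}
  [∀ n, AddCommGroup (M n)] [∀ n, Module R (M n)]
  [AddCommGroup Xp] [Module R Xp] [AddCommGroup Xm] [Module R Xm]
  (X : AnnularModule R M Xp Xm)

theorem α_odd_comp_β_one {k i : ℕ} (hi : i < k + 2) :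
    X.α (k + 1) (2 * (i + 1) + 1) ∘ₗ X.β (k + 1) 1 = X.β k 1 ∘ₗ X.α k (2 * i + 1) :=
  X.rel6_gt k (2 * (i + 1) + 1) 1 le_rfl (by omega) (by omega) (by omega)

theorem bplus_zero_comp_β_one : X.bplus 0 ∘ₗ X.β 0 1 = X.δp 0 - X.β1 ∘ₗ X.α1 := by
  simp only [bplus, sum_range_succ, sum_range_zero, zero_add, pow_zero, pow_one, one_smul,
    neg_smul, LinearMap.add_comp, LinearMap.neg_comp, X.rel6_δp 0 1 le_rfl (by norm_num) rfl,
    X.rel6_gtp, sub_eq_add_neg]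

/-- Peeling off the `i = 0` term `α₁β₁ = δ₊` and commuting `β₁` past the remaining faces
shifts the alternating sign, which turns the rest of the sum into `-β₁ b₊`. -/
theorem bplus_succ_comp_β_one (k : ℕ) :
    X.bplus (k + 1) ∘ₗ X.β (k + 1) 1 = X.δp (k + 1) - X.β k 1 ∘ₗ X.bplus k := by
  have shift : ∀ i ∈ range (k + 2),
      ((-1 : ℤ) ^ (i + 1)) • (X.α (k + 1) (2 * (i + 1) + 1) ∘ₗ X.β (k + 1) 1) =
        -(((-1 : ℤ) ^ i) • (X.β k 1 ∘ₗ X.α k (2 * i + 1))) := fun i hi => by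
    rw [X.α_odd_comp_β_one (mem_range.mp hi), pow_succ, mul_neg_one, neg_smul]
  rw [bplus, bplus, LinearMap.finsetSum_comp, LinearMap.comp_finsetSum, sum_range_succ']
  simp only [LinearMap.smul_comp, LinearMap.comp_smul]
  rw [sum_congr rfl shift, sum_neg_distrib, pow_zero, one_smul,
    X.rel6_δp (k + 1) 1 le_rfl (by omega) rfl, neg_add_eq_sub]

end AnnularModule

/-- For an annular `R`-module `X`, for each `n ≥ 1` the identity
`β₁ b₊ + b₊ β₁ = δ₊ · id` holds on `X_n`: in degree `1` (`X_1 = M 0`, where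
`b₊ = α₁ : X_1 → X_+`) this reads `β1 ∘ α1 + b₊ ∘ β₁ = δ₊`, and in degree `n = k + 2`
(`X_n = M (k+1)`) it reads `β₁ ∘ b₊ + b₊ ∘ β₁ = δ₊`. -/
theorem beta_one_bplus_homotopy {R : Type*} [CommRing R] {M : ℕ → Type*} {Xp Xm : Type*}
    [∀ n, AddCommGroup (M n)] [∀ n, Module R (M n)]
    [AddCommGroup Xp] [Module R Xp] [AddCommGroup Xm] [Module R Xm]
    (X : AnnularModule R M Xp Xm) :
    (X.β1 ∘ₗ X.α1 + X.bplus 0 ∘ₗ X.β 0 1 = X.δp 0) ∧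
    (∀ k : ℕ, X.β k 1 ∘ₗ X.bplus k + X.bplus (k + 1) ∘ₗ X.β (k + 1) 1 = X.δp (k + 1)) :=
  ⟨by rw [X.bplus_zero_comp_β_one, add_sub_cancel],
    fun k => by rw [X.bplus_succ_comp_β_one, add_sub_cancel]⟩
end

section
/- Let X_• be an annular R-module such that the coupling constant δ_+ acts on each X_n by multiplication by a unit u ∈ R^×. Then the Hochschild homology of the associated (+)-semi-simplicial module (with boundary b_+ = Σ_{i=0}^{n-1} (-1)^i α_{2i+1}) vanishes in all degrees: ker(b_+)/im(b_+) = 0 on X_n for all n ≥ 1. -/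
open scoped BigOperators

/-!
With `s = β₁`, the relations `α₁β₁ = δ₊` and `α_{2i+3}β₁ = β₁α_{2i+1}` of `aΔ` give
`b₊ s + s b₊ = δ₊` (in degree 1, with `b₊ = α₁ : X_1 → X_+` on the right).
When `δ₊` acts by a unit `u`, `u⁻¹ s` is therefore a contracting homotopy, so every
cycle `x` is the boundary of `u⁻¹ s x`.
-/

namespace LinearMap

variable {R : Type*} [CommSemiring R] {N P Q : Type*}
  [AddCommMonoid N] [Module R N] [AddCommMonoid P] [Module R P] [AddCommMonoid Q] [Module R Q]

theorem ker_le_range_of_comp_add_comp_eq_unit_smul {d : N →ₗ[R] P} {d' : P →ₗ[R] Q}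
    (s : P →ₗ[R] N) (s' : Q →ₗ[R] P) (u : Rˣ)
    (hs : d ∘ₗ s + s' ∘ₗ d' = (u : R) • LinearMap.id) : ker d' ≤ range d := by
  intro x hx
  refine ⟨((u⁻¹ : Rˣ) : R) • s x, ?_⟩
  have hx' : d (s x) = (u : R) • x := by
    simpa [mem_ker.1 hx] using congr($hs x)
  rw [map_smul, hx', smul_smul, Units.inv_mul, one_smul]

end LinearMap

namespace AnnularModule

variable {R : Type*} [CommRing R] {M : ℕ → Type*} {Xp Xm : Type*}
  [∀ n, AddCommGroup (M n)] [∀ n, Module R (M n)]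
  [AddCommGroup Xp] [Module R Xp] [AddCommGroup Xm] [Module R Xm]
  (X : AnnularModule R M Xp Xm)

theorem bplus_zero_comp_β_one_add_β1_comp_α1 :
    X.bplus 0 ∘ₗ X.β 0 1 + X.β1 ∘ₗ X.α1 = X.δp 0 := by
  ext x
  have h_δ := congr($(X.rel6_δp 0 1 le_rfl (by norm_num) rfl) x)
  have h_gt := congr($X.rel6_gtp x)
  simp only [LinearMap.comp_apply] at h_δ h_gt
  simp [bplus, Finset.sum_range_succ, h_δ, h_gt]

theorem bplus_succ_comp_β_one_add_β_one_comp_bplus (k : ℕ) :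
    X.bplus (k + 1) ∘ₗ X.β (k + 1) 1 + X.β k 1 ∘ₗ X.bplus k = X.δp (k + 1) := by
  ext x
  have h_shift : ∀ i ∈ Finset.range (k + 2),
      X.α (k + 1) (2 * (i + 1) + 1) (X.β (k + 1) 1 x) = X.β k 1 (X.α k (2 * i + 1) x) := by
    intro i hi
    rw [Finset.mem_range] at hi
    have h_gt := X.rel6_gt k (2 * (i + 1) + 1) 1 le_rfl (by omega) (by omega) (by omega)
    rw [show 2 * (i + 1) + 1 - 2 = 2 * i + 1 by omega] at h_gt
    exact congr($h_gt x)
  have h_δ := congr($(X.rel6_δp (k + 1) 1 le_rfl (by omega) rfl) x)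
  simp only [bplus, LinearMap.add_apply, LinearMap.comp_apply, LinearMap.sum_apply,
    LinearMap.smul_apply, map_sum, map_zsmul] at h_δ ⊢
  rw [Finset.sum_range_succ']
  simp +contextual only [pow_succ, mul_neg_one, neg_smul, Finset.sum_neg_distrib, h_shift, h_δ]
  abel

end AnnularModule

/-- If the coupling constant `δ₊` of an annular `R`-module acts on each `X_n` by
multiplication by a unit `u ∈ Rˣ`, then the Hochschild homology of the associated
`(+)`-semi-simplicial module vanishes in all degrees `n ≥ 1`:
`ker b₊ ⊆ im b₊` at `X_1 = M 0` (where `b₊ = α₁ : X_1 → X_+`)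
and at every `X_{k+2} = M (k+1)`. -/
theorem hochschild_vanishing {R : Type*} [CommRing R] {M : ℕ → Type*} {Xp Xm : Type*}
    [∀ n, AddCommGroup (M n)] [∀ n, Module R (M n)]
    [AddCommGroup Xp] [Module R Xp] [AddCommGroup Xm] [Module R Xm]
    (X : AnnularModule R M Xp Xm) (u : Rˣ)
    (hδ : ∀ k : ℕ, X.δp k = (u : R) • (LinearMap.id : M k →ₗ[R] M k)) :
    (∀ x : M 0, X.α1 x = 0 → ∃ y : M 1, X.bplus 0 y = x) ∧
    (∀ (k : ℕ) (x : M (k + 1)), X.bplus k x = 0 → ∃ y : M (k + 2), X.bplus (k + 1) y = x) := by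
  refine ⟨fun x hx => ?_, fun k x hx => ?_⟩
  · exact LinearMap.ker_le_range_of_comp_add_comp_eq_unit_smul _ _ u
      ((X.bplus_zero_comp_β_one_add_β1_comp_α1).trans (hδ 0)) hx
  · exact LinearMap.ker_le_range_of_comp_add_comp_eq_unit_smul _ _ u
      ((X.bplus_succ_comp_β_one_add_β_one_comp_bplus k).trans (hδ (k + 1))) hx
end
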